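/- arXiv:math/0210405 — 6 statements merged into one kernel-verified Lean document; each statement's English description precedes it below -/
import Mathlib

section
/- Let G be a finite group and H a maximal subgroup of G which is simple and nonabelian. If the inclusion H ↪ G is a localization (i.e., restriction along the inclusion gives a bijection Hom(G,G) → Hom(H,G)), then H is not a normal subgroup of G. -/
/-- A subgroup inclusion `H ↪ G` is a localization if precomposition with the
inclusion gives a bijection `Hom(G,G) → Hom(H,G)`. -/
def Subgroup.IsLocalization {G : Type*} [Group G] (H : Subgroup G) : Prop :=
  Function.Bijective (fun ψ : G →* G => ψ.comp H.subtype)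

theorem stmt0 {G : Type*} [Group G] [Finite G] (H : Subgroup G)
    (hmax : IsCoatom H) (hsimple : IsSimpleGroup H)
    (hnonab : ¬ ∀ a b : H, a * b = b * a)
    (hloc : H.IsLocalization) :
    ¬ H.Normal := by
  intro hN
  -- the quotient map
  let π : G →* G ⧸ H := QuotientGroup.mk' H
  have hπ : Function.Surjective π := QuotientGroup.mk'_surjective H
  -- pick x ∉ H
  obtain ⟨x, hx⟩ : ∃ x : G, x ∉ H := by
    by_contra h
    push_neg at h
    exact hmax.1 ((Subgroup.eq_top_iff' H).2 h)
  set q : G ⧸ H := π x with hq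
  have hq1 : q ≠ 1 := by
    simpa [hq, π, QuotientGroup.eq_one_iff] using hx
  -- every nontrivial subgroup of G ⧸ H is everything
  have hdich : ∀ K : Subgroup (G ⧸ H), K ≠ ⊥ → K = ⊤ := by
    intro K hK
    have hle : H ≤ K.comap π := by
      intro h hh
      have : π h = 1 := (QuotientGroup.eq_one_iff h).2 hh
      simp only [Subgroup.mem_comap, this]
      exact K.one_mem
    rcases eq_or_lt_of_le hle with heq | hlt
    · exfalso
      apply hK
      have : K = (K.comap π).map π := (Subgroup.map_comap_eq_self_of_surjective hπ K).symm
      rw [this, ← heq]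
      rw [Subgroup.map_eq_bot_iff]
      intro h hh
      simpa [π, QuotientGroup.eq_one_iff] using hh
    · have htop : K.comap π = ⊤ := hmax.2 _ hlt
      have : K = (K.comap π).map π := (Subgroup.map_comap_eq_self_of_surjective hπ K).symm
      rw [this, htop]
      exact Subgroup.map_top_of_surjective π hπ
  -- q generates the quotient
  have hgen : Subgroup.zpowers q = ⊤ := by
    apply hdich
    intro hbot
    exact hq1 (by simpa [hbot] using Subgroup.mem_zpowers q)
  haveI : IsCyclic (G ⧸ H) := ⟨⟨q, fun a => by
    show a ∈ Subgroup.zpowers q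
    rw [hgen]; exact Subgroup.mem_top a⟩⟩
  -- n is the order of the quotient
  set n : ℕ := orderOf q with hn
  have hcardQ : Nat.card (G ⧸ H) = n := by
    rw [hn, ← Nat.card_zpowers, hgen, Subgroup.card_top]
  -- y := a power of x of order exactly n
  have hdvd : n ∣ orderOf x := hn ▸ orderOf_map_dvd π x
  set y : G := x ^ (orderOf x / n) with hy
  have hxpos : 0 < orderOf x := by
    have : IsOfFinOrder x := isOfFinOrder_of_finite x
    exact this.orderOf_pos
  have hnpos : 0 < n := Nat.pos_of_dvd_of_pos hdvd hxpos
  have hordy : orderOf y = n := by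
    rw [hy, orderOf_pow]
    have h1 : (orderOf x / n) ∣ orderOf x := Nat.div_dvd_of_dvd hdvd
    rw [Nat.gcd_eq_right h1]
    exact Nat.div_div_self hdvd hxpos.ne'
  -- zpowers y is cyclic of order n
  haveI : IsCyclic (Subgroup.zpowers y) := by
    refine ⟨⟨⟨y, Subgroup.mem_zpowers y⟩, ?_⟩⟩
    rintro ⟨z, hz⟩
    obtain ⟨k, rfl⟩ := hz
    exact ⟨k, by ext; simp⟩
  have hcardy : Nat.card (Subgroup.zpowers y) = n := by
    rw [Nat.card_zpowers, hordy]
  -- build a nontrivial homomorphism G ⧸ H →* G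
  let e : (G ⧸ H) ≃* Subgroup.zpowers y :=
    mulEquivOfCyclicCardEq (by rw [hcardQ, hcardy])
  let f : (G ⧸ H) →* G := (Subgroup.zpowers y).subtype.comp e.toMonoidHom
  have hfinj : Function.Injective f := (Subgroup.subtype_injective _).comp e.injective
  -- the contradiction
  let ψ : G →* G := f.comp π
  have h1 : ψ.comp H.subtype = (1 : G →* G).comp H.subtype := by
    ext ⟨h, hh⟩
    have : π h = 1 := (QuotientGroup.eq_one_iff h).2 hh
    simp [ψ, this]
  have hψ : ψ = 1 := hloc.injective h1
  have : f q = 1 := by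
    have := congrArg (fun φ : G →* G => φ x) hψ
    simpa [ψ, hq] using this
  exact hq1 (hfinj (by simpa using this))
end

section
/- Let G be a finite group and H a maximal subgroup of G which is simple and nonabelian. If the inclusion H ↪ G is a localization, then G is simple. -/
/-- If `N` is a normal complement to `H` (trivial intersection, sup everything) and
`H` is a localization, then `N` is trivial. -/
lemma aux_complement {G : Type*} [Group G] (H N : Subgroup G) [hN : N.Normal]
    (hdisj : Disjoint N H) (hsup : H ⊔ N = ⊤) (hloc : H.IsLocalization) : N = ⊥ := by
  set q := QuotientGroup.mk' N with hq
  set e := q.comp H.subtype with he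
  have einj : Function.Injective e := by
    rw [← MonoidHom.ker_eq_bot_iff]
    ext h
    simp only [MonoidHom.mem_ker, Subgroup.mem_bot, he, MonoidHom.comp_apply,
      Subgroup.coe_subtype, hq, QuotientGroup.mk'_apply, QuotientGroup.eq_one_iff]
    constructor
    · intro hmem
      have : (h : G) ∈ N ⊓ H := ⟨hmem, h.2⟩
      rw [hdisj.eq_bot] at this
      exact Subtype.ext this
    · rintro rfl; simpa using N.one_mem
  have esurj : Function.Surjective e := by
    intro y
    induction y using QuotientGroup.induction_on with
    | H x =>
      have hx : x ∈ (↑(N ⊔ H) : Set G) := by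
        rw [sup_comm] at hsup
        rw [hsup]; trivial
      rw [Subgroup.normal_mul] at hx
      obtain ⟨n, hn, h, hh, rfl⟩ := hx
      refine ⟨⟨h, hh⟩, ?_⟩
      simp only [he, MonoidHom.comp_apply, Subgroup.coe_subtype, hq, QuotientGroup.mk'_apply]
      rw [QuotientGroup.eq]
      simpa [mul_assoc] using hN.conj_mem n hn h⁻¹
  set E := MulEquiv.ofBijective e ⟨einj, esurj⟩ with hE
  set φ : G →* G := (H.subtype.comp E.symm.toMonoidHom).comp q with hφdef
  have hφ : φ.comp H.subtype = (MonoidHom.id G).comp H.subtype := by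
    ext h
    have h1 : q (H.subtype h) = E h := rfl
    simp only [MonoidHom.comp_apply, MonoidHom.id_apply, hφdef, h1,
      MulEquiv.coe_toMonoidHom, MulEquiv.symm_apply_apply]
  have hid : φ = MonoidHom.id G := hloc.injective hφ
  ext n
  simp only [Subgroup.mem_bot]
  constructor
  · intro hn
    have h1 : φ n = n := by rw [hid]; rfl
    have h2 : φ n = 1 := by
      have hqn : q n = 1 := by
        simpa only [hq, QuotientGroup.mk'_apply, QuotientGroup.eq_one_iff] using hn
      simp only [hφdef, MonoidHom.comp_apply, hqn, map_one]
    rw [h1] at h2; exact h2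
  · rintro rfl; exact N.one_mem

theorem stmt1 {G : Type*} [Group G] [Finite G] (H : Subgroup G)
    (hmax : IsCoatom H) (hsimple : IsSimpleGroup H)
    (hnonab : ¬ ∀ a b : H, a * b = b * a)
    (hloc : H.IsLocalization) :
    IsSimpleGroup G := by
  have hGnt : Nontrivial G := by
    obtain ⟨h, hh⟩ := exists_ne (1 : H)
    exact nontrivial_of_ne (h : G) 1 (fun hc => hh (Subtype.ext (by simpa using hc)))
  refine ⟨fun N hN => ?_⟩
  by_contra hcon
  push_neg at hcon
  obtain ⟨hNbot, hNtop⟩ := hcon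
  by_cases hle : N ≤ H
  · -- N ≤ H, so N normal in H, hence N = ⊥ or N = H
    have hnorm : (N.subgroupOf H).Normal := hN.subgroupOf H
    rcases hsimple.eq_bot_or_eq_top_of_normal _ hnorm with hb | ht
    · exact hNbot ((Subgroup.subgroupOf_eq_bot.mp hb).eq_bot_of_le hle)
    · -- H ≤ N, so N = H, H is normal
      have hHN : N = H := le_antisymm hle (Subgroup.subgroupOf_eq_top.mp ht)
      subst hHN
      have hsurj : Function.Surjective (QuotientGroup.mk' N) := QuotientGroup.mk'_surjective N
      -- every subgroup of G ⧸ N is ⊥ or ⊤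
      have hsubq : ∀ Q : Subgroup (G ⧸ N), Q = ⊥ ∨ Q = ⊤ := by
        intro Q
        have hker : N ≤ Subgroup.comap (QuotientGroup.mk' N) Q := by
          intro n hn
          have : QuotientGroup.mk' N n = 1 := by
            simpa [QuotientGroup.eq_one_iff] using hn
          simp only [Subgroup.mem_comap, this]
          exact Q.one_mem
        rcases eq_or_lt_of_le hker with heq | hlt
        · left
          apply Subgroup.comap_injective hsurj
          rw [← heq, MonoidHom.comap_bot, QuotientGroup.ker_mk']
        · right
          apply Subgroup.comap_injective hsurj
          rw [hmax.2 _ hlt, Subgroup.comap_top]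
      have hq_nt : Nontrivial (G ⧸ N) := by
        obtain ⟨x, hx⟩ := SetLike.exists_of_lt (lt_top_iff_ne_top.mpr hmax.1 : N < ⊤)
        exact nontrivial_of_ne (QuotientGroup.mk x) 1
          (by simpa [QuotientGroup.eq_one_iff] using hx.2)
      have hfin : Finite (G ⧸ N) := Quotient.finite _
      -- G ⧸ N has an element of prime order p
      obtain ⟨p, hp, hpd⟩ := Nat.exists_prime_and_dvd
        (n := Nat.card (G ⧸ N)) (by
          have h1 : 1 < Nat.card (G ⧸ N) := Finite.one_lt_card
          omega)
      have : Fact p.Prime := ⟨hp⟩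
      obtain ⟨y, hy⟩ := exists_prime_orderOf_dvd_card' (G := G ⧸ N) p hpd
      have hy1 : y ≠ 1 := by
        intro hc
        rw [hc, orderOf_one] at hy
        exact hp.one_lt.ne hy
      have hzp : Subgroup.zpowers y = ⊤ := by
        rcases hsubq (Subgroup.zpowers y) with hb | ht'
        · exact absurd (by rw [← Subgroup.mem_bot, ← hb]; exact Subgroup.mem_zpowers y) hy1
        · exact ht'
      have hcardq : Nat.card (G ⧸ N) = p := by
        rw [← hy, ← Nat.card_zpowers, hzp]
        exact (Nat.card_congr (Subgroup.topEquiv.toEquiv)).symm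
      -- Cauchy in G
      have hpdvdG : p ∣ Nat.card G := by
        rw [← hcardq]
        exact Subgroup.index_dvd_card N
      obtain ⟨g, hg⟩ := exists_prime_orderOf_dvd_card' (G := G) p hpdvdG
      have hcardg : Nat.card (Subgroup.zpowers g) = p := by rw [Nat.card_zpowers, hg]
      -- iso between G ⧸ N and zpowers g
      let E2 : (G ⧸ N) ≃* Subgroup.zpowers g := mulEquivOfPrimeCardEq hcardq hcardg
      set ψ : G →* G :=
        ((Subgroup.zpowers g).subtype.comp E2.toMonoidHom).comp (QuotientGroup.mk' N) with hψdef
      have hψ : ψ.comp N.subtype = (1 : G →* G).comp N.subtype := by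
        ext h
        have hqh : QuotientGroup.mk' N (N.subtype h) = 1 := by
          simp [QuotientGroup.eq_one_iff]
        simp only [hψdef, MonoidHom.comp_apply, hqh, map_one, MonoidHom.one_apply,
          OneMemClass.coe_one]
      have hψ1 : ψ = 1 := hloc.injective hψ
      obtain ⟨x, hx⟩ := SetLike.exists_of_lt (lt_top_iff_ne_top.mpr hmax.1 : N < ⊤)
      have hxN : x ∉ N := hx.2
      have : ψ x = 1 := by rw [hψ1]; rfl
      have hE2 : E2 (QuotientGroup.mk' N x) = 1 := by
        apply Subtype.ext
        simpa only [hψdef, MonoidHom.comp_apply, Subgroup.coe_subtype,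
          MulEquiv.coe_toMonoidHom, OneMemClass.coe_one] using this
      have hone : (QuotientGroup.mk' N x : G ⧸ N) = 1 := by
        apply E2.injective
        rw [hE2, map_one]
      exact hxN (by simpa [QuotientGroup.eq_one_iff] using hone)
  · -- ¬ N ≤ H : then H ⊔ N = ⊤ and N ⊓ H = ⊥
    have hsup : H ⊔ N = ⊤ := by
      apply hmax.2
      rcases eq_or_lt_of_le (le_sup_left : H ≤ H ⊔ N) with heq | hlt
      · exact absurd (heq ▸ le_sup_right : N ≤ H) hle
      · exact hlt
    have hnorm : (N.subgroupOf H).Normal := hN.subgroupOf H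
    rcases hsimple.eq_bot_or_eq_top_of_normal _ hnorm with hb | ht
    · exact hNbot (aux_complement H N (Subgroup.subgroupOf_eq_bot.mp hb) hsup hloc)
    · have h1 : H ≤ N := Subgroup.subgroupOf_eq_top.mp ht
      exact hNtop (le_antisymm le_top (by rw [← hsup]; exact sup_le h1 le_rfl))
end

section
/- Let G be a group and H ≤ G a subgroup such that the inclusion i : H ↪ G is a localization. Then there is no normal subgroup N of G containing H such that G/N has prime order p and G contains a subgroup of order p. -/
theorem stmt3 {G : Type*} [Group G] (H : Subgroup G)
    (hloc : H.IsLocalization)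
    (N : Subgroup G) (hN : N.Normal) (hHN : H ≤ N)
    (p : ℕ) (hp : p.Prime) (hquot : Nat.card (G ⧸ N) = p)
    (K : Subgroup G) (hK : Nat.card K = p) :
    False := by
  haveI : Fact p.Prime := ⟨hp⟩
  let e : (G ⧸ N) ≃* K := mulEquivOfPrimeCardEq hquot hK
  let ψ : G →* G := K.subtype.comp ((e.toMonoidHom).comp (QuotientGroup.mk' N))
  have hψ1 : ψ.comp H.subtype = (1 : G →* G).comp H.subtype := by
    ext x
    have hx : (QuotientGroup.mk' N) (H.subtype x) = 1 := by
      simpa [QuotientGroup.eq_one_iff] using hHN x.2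
    simp only [ψ, MonoidHom.comp_apply, hx, map_one, MonoidHom.one_comp]
    simp
  have := hloc.1 hψ1
  -- ψ = 1, but ψ is nontrivial since quotient is nontrivial
  have hnt : Nontrivial (G ⧸ N) := by
    haveI : Finite (G ⧸ N) := Nat.finite_of_card_ne_zero (by rw [hquot]; exact hp.pos.ne')
    exact Finite.one_lt_card_iff_nontrivial.mp (by rw [hquot]; exact hp.one_lt)
  obtain ⟨q, hq⟩ := exists_ne (1 : G ⧸ N)
  obtain ⟨g, rfl⟩ := QuotientGroup.mk'_surjective N q
  have : ψ g = 1 := by rw [this]; rfl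
  have : (e (QuotientGroup.mk' N g) : G) = 1 := this
  have h1 : e (QuotientGroup.mk' N g) = 1 := Subtype.ext this
  exact hq (e.injective (h1.trans (map_one e).symm))
end

section
/- Let H and G be groups with trivial centers, and let i : H ↪ G be an injective localization. Then there is a unique homomorphism j : Aut(H) → Aut(G) such that for every α ∈ Aut(H), j(α) ∘ i = i ∘ α (identifying H with its image); moreover j is injective and extends the map sending inner automorphisms c_h to c_{i(h)}. -/
/-!
Every endomorphism `f` of `H` gives the map `i ∘ f : H → G`, which extends uniquely along the
localization `i` to an endomorphism of `G`. By uniqueness this assignment is multiplicative, so it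
carries automorphisms to automorphisms; injectivity of `i` makes it injective, and the conjugation
`c_{i h}` is an extension of `i ∘ c_h`, hence equal to the extension.
-/

/-- A homomorphism `i : H →* G` is a localization if precomposition with `i`
gives a bijection `Hom(G,G) → Hom(H,G)`. -/
def MonoidHom.IsLocalization {H G : Type*} [Group H] [Group G] (i : H →* G) : Prop :=
  Function.Bijective (fun ψ : G →* G => ψ.comp i)

namespace MonoidHom.IsLocalization

variable {H G : Type*} [Group H] [Group G] {i : H →* G}

theorem ext (hloc : i.IsLocalization) {ψ ψ' : G →* G} (h : ∀ x, ψ (i x) = ψ' (i x)) :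
    ψ = ψ' :=
  hloc.injective (MonoidHom.ext h)

noncomputable def extend (hloc : i.IsLocalization) (f : H →* G) : G →* G :=
  (Equiv.ofBijective _ hloc).symm f

theorem extend_apply (hloc : i.IsLocalization) (f : H →* G) (x : H) :
    hloc.extend f (i x) = f x :=
  DFunLike.congr_fun ((Equiv.ofBijective _ hloc).apply_symm_apply f) x

theorem mulEquiv_ext (hloc : i.IsLocalization) {β β' : MulAut G}
    (h : ∀ x, β (i x) = β' (i x)) : β = β' :=
  MulEquiv.ext fun x =>
    DFunLike.congr_fun (hloc.ext (ψ := β.toMonoidHom) (ψ' := β'.toMonoidHom) h) x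

noncomputable def extendEnd (hloc : i.IsLocalization) (f : H →* H) : G →* G :=
  hloc.extend (i.comp f)

theorem extendEnd_apply (hloc : i.IsLocalization) (f : H →* H) (x : H) :
    hloc.extendEnd f (i x) = i (f x) :=
  hloc.extend_apply _ x

theorem extendEnd_comp_extendEnd (hloc : i.IsLocalization) {f g : H →* H}
    (h : ∀ x, f (g x) = x) : (hloc.extendEnd f).comp (hloc.extendEnd g) = MonoidHom.id G :=
  hloc.ext fun x => by simp [extendEnd_apply, h]

noncomputable def mapAut (hloc : i.IsLocalization) : MulAut H →* MulAut G where
  toFun α := (hloc.extendEnd α.toMonoidHom).toMulEquiv (hloc.extendEnd α⁻¹.toMonoidHom)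
    (hloc.extendEnd_comp_extendEnd (α.symm_apply_apply ·))
    (hloc.extendEnd_comp_extendEnd (α.apply_symm_apply ·))
  map_one' := hloc.mulEquiv_ext fun x => by simp [extendEnd_apply]
  map_mul' α β := hloc.mulEquiv_ext fun x => by simp [extendEnd_apply]

theorem mapAut_apply (hloc : i.IsLocalization) (α : MulAut H) (x : H) :
    hloc.mapAut α (i x) = i (α x) :=
  hloc.extendEnd_apply _ x

theorem eq_mapAut (hloc : i.IsLocalization) {α : MulAut H} {β : MulAut G}
    (h : ∀ x, β (i x) = i (α x)) : β = hloc.mapAut α :=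
  hloc.mulEquiv_ext fun x => by rw [h, mapAut_apply]

theorem mapAut_conj (hloc : i.IsLocalization) (h : H) :
    hloc.mapAut (MulAut.conj h) = MulAut.conj (i h) :=
  (hloc.eq_mapAut fun x => by simp).symm

theorem mapAut_injective (hloc : i.IsLocalization) (hinj : Function.Injective i) :
    Function.Injective hloc.mapAut := fun α β hαβ =>
  MulEquiv.ext fun x => hinj <| by rw [← hloc.mapAut_apply, ← hloc.mapAut_apply, hαβ]

end MonoidHom.IsLocalization

theorem stmt12_general {H G : Type*} [Group H] [Group G]
    (i : H →* G) (hinj : Function.Injective i)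
    (hloc : i.IsLocalization) :
    ∃ j : MulAut H →* MulAut G,
      (∀ (α : MulAut H) (h : H), j α (i h) = i (α h)) ∧
      Function.Injective j ∧
      (∀ h : H, j (MulAut.conj h) = MulAut.conj (i h)) ∧
      (∀ j' : MulAut H →* MulAut G,
        (∀ (α : MulAut H) (h : H), j' α (i h) = i (α h)) → j' = j) :=
  ⟨hloc.mapAut, hloc.mapAut_apply, hloc.mapAut_injective hinj, hloc.mapAut_conj,
    fun _ hj' => MonoidHom.ext fun α => hloc.eq_mapAut (hj' α)⟩

theorem stmt12 {H G : Type*} [Group H] [Group G]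
    (hZH : Subgroup.center H = ⊥) (hZG : Subgroup.center G = ⊥)
    (i : H →* G) (hinj : Function.Injective i)
    (hloc : i.IsLocalization) :
    ∃ j : MulAut H →* MulAut G,
      (∀ (α : MulAut H) (h : H), j α (i h) = i (α h)) ∧
      Function.Injective j ∧
      (∀ h : H, j (MulAut.conj h) = MulAut.conj (i h)) ∧
      (∀ j' : MulAut H →* MulAut G,
        (∀ (α : MulAut H) (h : H), j' α (i h) = i (α h)) → j' = j) :=
  stmt12_general i hinj hloc
end

section
/- Let i : H ↪ G be a localization between groups, and let α ∈ Aut(H). Then the unique endomorphism β of G satisfying β ∘ i = i ∘ α is an automorphism of G. -/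
theorem stmt13 {H G : Type*} [Group H] [Group G]
    (i : H →* G) (hloc : i.IsLocalization) (α : MulAut H)
    (β : G →* G) (hβ : β.comp i = i.comp (α : H →* H)) :
    Function.Bijective β := by
  obtain ⟨β', hβ'⟩ := hloc.2 (i.comp (α.symm : H →* H))
  simp only at hβ'
  have h1 : (β.comp β').comp i = (MonoidHom.id G).comp i := by
    rw [MonoidHom.comp_assoc, hβ', ← MonoidHom.comp_assoc, hβ]
    ext x
    simp
  have h2 : (β'.comp β).comp i = (MonoidHom.id G).comp i := by
    rw [MonoidHom.comp_assoc, hβ, ← MonoidHom.comp_assoc, hβ']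
    ext x
    simp
  have e1 : β.comp β' = MonoidHom.id G := hloc.1 h1
  have e2 : β'.comp β = MonoidHom.id G := hloc.1 h2
  exact ⟨Function.LeftInverse.injective (g := β') fun x =>
      congrArg (fun f => f x) e2,
    Function.RightInverse.surjective (g := β') fun x =>
      congrArg (fun f => f x) e1⟩
end

section
/- Let q : G̃ → G be a surjective homomorphism with kernel contained in the center of G̃, where G is a nonabelian simple group, and assume every endomorphism of G̃ is either trivial or an automorphism. Then every endomorphism of G̃ maps ker(q) into ker(q), and q induces an injective homomorphism Aut(G̃) → Aut(G); if moreover every homomorphism G → G lifts (uniquely up to the central kernel) through q, this map is an isomorphism Aut(G̃) ≅ Aut(G). -/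
/-!
A nonabelian simple group has trivial center, so a central extension `q : Gt → G` has kernel
exactly `Z(Gt)`, which every automorphism, and hence every endomorphism, preserves. So each
automorphism `α` of `Gt` descends to `G`.
If `α` descends to the identity, then `x ↦ α x * x⁻¹` is an endomorphism of `Gt` with central
values: it cannot be bijective, since `Gt` and hence `G` would be abelian, so it is trivial and
`α = 1`. Conversely a lift of an automorphism `β` of `G` is a nontrivial endomorphism of `Gt`,
hence an automorphism, and it descends to `β`.
-/

open Subgroup Function

theorem IsSimpleGroup.center_eq_bot {G : Type*} [Group G] (hG : IsSimpleGroup G)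
    (hnonab : ¬ ∀ a b : G, a * b = b * a) : center G = ⊥ :=
  (hG.eq_bot_or_eq_top_of_normal _ inferInstance).resolve_right fun h =>
    hnonab fun a b => mem_center_iff.mp (h ▸ mem_top b) a

theorem Subgroup.Characteristic.apply_mem {G : Type*} [Group G] {H : Subgroup G}
    [H.Characteristic] (α : MulAut G) {x : G} (hx : x ∈ H) : α x ∈ H :=
  characteristic_iff_le_comap.mp ‹_› α hx

namespace MonoidHom

section Central

variable {G : Type*} [Group G]

def mulInvOfCentral (f : G →* G) (hf : ∀ x, f x * x⁻¹ ∈ center G) : G →* G where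
  toFun x := f x * x⁻¹
  map_one' := by simp
  map_mul' x y := by
    calc f (x * y) * (x * y)⁻¹ = f x * ((f y * y⁻¹) * x⁻¹) := by simp [mul_assoc]
      _ = f x * (x⁻¹ * (f y * y⁻¹)) := by rw [mem_center_iff.mp (hf y) x⁻¹]
      _ = f x * x⁻¹ * (f y * y⁻¹) := by rw [mul_assoc]

@[simp]
theorem mulInvOfCentral_apply (f : G →* G) (hf : ∀ x, f x * x⁻¹ ∈ center G) (x : G) :
    mulInvOfCentral f hf x = f x * x⁻¹ :=
  rfl

end Central

variable {Gt G : Type*} [Group Gt] [Group G] (q : Gt →* G)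

theorem map_mem_center_of_surjective (hq : Surjective q) {z : Gt} (hz : z ∈ center Gt) :
    q z ∈ center G := by
  refine mem_center_iff.mpr (hq.forall.mpr fun y => ?_)
  rw [← map_mul, ← map_mul, mem_center_iff.mp hz y]

theorem center_le_ker_of_surjective (hq : Surjective q) (hG : center G = ⊥) :
    center Gt ≤ q.ker := fun _ hz =>
  (hG ▸ q.map_mem_center_of_surjective hq hz : _ ∈ (⊥ : Subgroup G))

noncomputable def inducedEnd (hq : Surjective q) (f : Gt →* Gt)
    (hf : ∀ x ∈ q.ker, f x ∈ q.ker) : G →* G :=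
  q.liftOfRightInverse (surjInv hq) (rightInverse_surjInv hq) ⟨q.comp f, hf⟩

theorem inducedEnd_apply (hq : Surjective q) (f : Gt →* Gt) (hf : ∀ x ∈ q.ker, f x ∈ q.ker)
    (x : Gt) :
    q.inducedEnd hq f hf (q x) = q (f x) :=
  q.liftOfRightInverse_comp_apply _ _ ⟨q.comp f, hf⟩ x

variable [q.ker.Characteristic]

noncomputable def inducedMulAut (hq : Surjective q) : MulAut Gt →* MulAut G where
  toFun α :=
    { toFun := q.inducedEnd hq α.toMonoidHom fun _ => Characteristic.apply_mem α
      invFun := q.inducedEnd hq α.symm.toMonoidHom fun _ => Characteristic.apply_mem α.symm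
      left_inv := hq.forall.mpr fun x => by simp [inducedEnd_apply]
      right_inv := hq.forall.mpr fun x => by simp [inducedEnd_apply]
      map_mul' := map_mul _ }
  map_one' := MulEquiv.ext <| hq.forall.mpr fun x => by simp [inducedEnd_apply]
  map_mul' α β := MulEquiv.ext <| hq.forall.mpr fun x => by simp [inducedEnd_apply]

theorem inducedMulAut_apply (hq : Surjective q) (α : MulAut Gt) (x : Gt) :
    q.inducedMulAut hq α (q x) = q (α x) :=
  q.inducedEnd_apply hq _ (fun _ => Characteristic.apply_mem α) x

theorem inducedMulAut_injective (hq : Surjective q) (hqc : q.ker ≤ center Gt)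
    (hnonab : ¬ ∀ a b : G, a * b = b * a) (hend : ∀ f : Gt →* Gt, f = 1 ∨ Bijective f) :
    Injective (q.inducedMulAut hq) := by
  refine (injective_iff_map_eq_one _).mpr fun α hα => ?_
  have hcen (x : Gt) : α.toMonoidHom x * x⁻¹ ∈ center Gt := hqc <| by
    rw [mem_ker, map_mul, map_inv, MulEquiv.coe_toMonoidHom, ← inducedMulAut_apply q hq, hα,
      MulAut.one_apply, mul_inv_cancel]
  rcases hend (mulInvOfCentral α.toMonoidHom hcen) with hc | hc
  · ext x
    simpa [mul_inv_eq_one] using DFunLike.congr_fun hc x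
  · refine absurd (fun a b => ?_) hnonab
    obtain ⟨a, rfl⟩ := hq a
    obtain ⟨b, rfl⟩ := hq b
    obtain ⟨c, rfl⟩ := hc.2 a
    rw [← map_mul, ← map_mul]
    exact congrArg q (mem_center_iff.mp (hcen c) b).symm

theorem inducedMulAut_surjective (hq : Surjective q) (hnonab : ¬ ∀ a b : G, a * b = b * a)
    (hend : ∀ f : Gt →* Gt, f = 1 ∨ Bijective f)
    (hlift : ∀ f : G →* G, ∃ g : Gt →* Gt, q.comp g = f.comp q) :
    Surjective (q.inducedMulAut hq) := by
  intro β
  obtain ⟨g, hg⟩ := hlift β.toMonoidHom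
  rcases hend g with rfl | hg_bij
  · have hβ : ∀ a, β a = 1 :=
      hq.forall.mpr fun x => by simpa using (DFunLike.congr_fun hg x).symm
    have htriv (a : G) : a = 1 := β.injective (by rw [hβ, map_one])
    exact absurd (fun a b => by rw [htriv a, htriv b]) hnonab
  · refine ⟨MulEquiv.ofBijective g hg_bij, MulEquiv.ext <| hq.forall.mpr fun x => ?_⟩
    rw [inducedMulAut_apply]
    exact DFunLike.congr_fun hg x

end MonoidHom

theorem stmt16 {Gt G : Type*} [Group Gt] [Group G]
    (q : Gt →* G) (hq : Function.Surjective q) (hqc : q.ker ≤ Subgroup.center Gt)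
    (hsimple : IsSimpleGroup G) (hnonab : ¬ ∀ a b : G, a * b = b * a)
    (hend : ∀ f : Gt →* Gt, f = 1 ∨ Function.Bijective f) :
    (∀ f : Gt →* Gt, ∀ x ∈ q.ker, f x ∈ q.ker) ∧
    ∃ Φ : MulAut Gt →* MulAut G,
      (∀ (α : MulAut Gt) (x : Gt), Φ α (q x) = q (α x)) ∧
      Function.Injective Φ ∧
      ((∀ f : G →* G, ∃ g : Gt →* Gt, q.comp g = f.comp q) →
        Function.Bijective Φ) := by
  have hker : q.ker = center Gt :=
    le_antisymm hqc (q.center_le_ker_of_surjective hq (hsimple.center_eq_bot hnonab))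
  have : q.ker.Characteristic := hker ▸ inferInstance
  have hinj := q.inducedMulAut_injective hq hqc hnonab hend
  refine ⟨fun f x hx => ?_, q.inducedMulAut hq, q.inducedMulAut_apply hq, hinj,
    fun hlift => ⟨hinj, q.inducedMulAut_surjective hq hnonab hend hlift⟩⟩
  rcases hend f with rfl | hf
  · exact one_mem _
  · exact Characteristic.apply_mem (MulEquiv.ofBijective f hf) hx
end
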